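/- For a nonempty subset S of a real projective space P(V): (i) if S is projective convex then Φ(S) ⊆ P(V*) is projective convex; (ii) if S is open projective convex then Φ(S) is closed projective convex; (iii) if S is closed projective convex then Φ(S) is open projective convex. -/

import Mathlib

open scoped LinearAlgebra.Projectivization
open Projectivization

/-- The "positive" projective segment joining the points represented by `u` and `v`:
`{π(a•u + b•v) : a*b ≥ 0, (a,b) ≠ (0,0)}`. -/
def projSeg {W : Type*} [AddCommGroup W] [Module ℝ W] (u v : W) : Set (ℙ ℝ W) :=
  {x | ∃ (a b : ℝ) (h : a • u + b • v ≠ 0),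
    0 ≤ a * b ∧ x = Projectivization.mk ℝ (a • u + b • v) h}

/-- The "negative" projective segment joining the points represented by `u` and `v`:
`{π(a•u + b•v) : a*b ≤ 0, (a,b) ≠ (0,0)}`. -/
def projSegN {W : Type*} [AddCommGroup W] [Module ℝ W] (u v : W) : Set (ℙ ℝ W) :=
  {x | ∃ (a b : ℝ) (h : a • u + b • v ≠ 0),
    a * b ≤ 0 ∧ x = Projectivization.mk ℝ (a • u + b • v) h}

/-- A set in a real projective space is projective convex if for any two distinct points of it,
exactly one of the two projective segments joining them is contained in it. -/
def IsProjConvex {W : Type*} [AddCommGroup W] [Module ℝ W] (S : Set (ℙ ℝ W)) : Prop :=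
  ∀ p ∈ S, ∀ q ∈ S, p ≠ q →
    Xor' (projSeg p.rep q.rep ⊆ S) (projSegN p.rep q.rep ⊆ S)

/-- The quotient topology on a real projective space. -/
noncomputable instance projTopInst {W : Type*} [NormedAddCommGroup W] [NormedSpace ℝ W] :
    TopologicalSpace (ℙ ℝ W) :=
  instTopologicalSpaceQuotient

noncomputable instance dualNACG {W : Type*} [NormedAddCommGroup W] [NormedSpace ℝ W]
    [FiniteDimensional ℝ W] : NormedAddCommGroup (Module.Dual ℝ W) :=
  NormedAddCommGroup.induced _ _
    (LinearMap.toContinuousLinearMap : Module.Dual ℝ W ≃ₗ[ℝ] (W →L[ℝ] ℝ))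
    (LinearEquiv.injective _)

noncomputable instance dualNS {W : Type*} [NormedAddCommGroup W] [NormedSpace ℝ W]
    [FiniteDimensional ℝ W] : NormedSpace ℝ (Module.Dual ℝ W) :=
  NormedSpace.induced ℝ _ _
    (LinearMap.toContinuousLinearMap : Module.Dual ℝ W ≃ₗ[ℝ] (W →L[ℝ] ℝ))

/-- `Φ(S)`: the hyperplanes disjoint from `S`, viewed as points of the dual projective space. -/
def PhiMap {W : Type*} [AddCommGroup W] [Module ℝ W] (S : Set (ℙ ℝ W)) :
    Set (ℙ ℝ (Module.Dual ℝ W)) :=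
  {ψ | ∀ x ∈ S, ψ.rep x.rep ≠ 0}


/-! For linearly independent `u, v` and a linear functional `ℓ`, `ℓ` has no zero on the segment
`projSeg u v` iff `0 < ℓ u * ℓ v`: otherwise `(ℓ v) • u - (ℓ u) • v` is a zero on it.
Applied in `V`, this shows that for two functionals `φ, g` without zeros on a projective convex
`S`, the sign of `φ x * g x` is the same for all `x ∈ S`. Applied in `V*`, with `ℓ` the
evaluation at `x`, it shows that the positive (resp. negative) segment from `φ` to `g` lies in
`Φ(S)` iff that common sign is positive (resp. negative); exactly one of the two happens.

If `S` is closed, its unit representatives form a compact subset of the unit sphere, and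
"no zero on a compact set" is an open condition on `φ`. If `S` is open, a zero of `φ` in the
open cone over `S` persists under small perturbations of `φ`. -/

section Segments

variable {W : Type*} [AddCommGroup W] [Module ℝ W]

theorem projSegN_eq_projSeg_neg (u v : W) : projSegN u v = projSeg u (-v) := by
  ext x
  constructor <;>
  · rintro ⟨a, b, h, hab, rfl⟩
    exact ⟨a, -b, by simpa using h, by linarith, by simp⟩

theorem apply_mk_rep_eq_zero_iff (ℓ : W →ₗ[ℝ] ℝ) {w : W} (hw : w ≠ 0) :
    ℓ (mk ℝ w hw).rep = 0 ↔ ℓ w = 0 := by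
  obtain ⟨c, hc⟩ := exists_smul_eq_mk_rep ℝ w hw
  simp [← hc, Units.smul_def]

theorem forall_mem_projSeg_apply_rep_ne_zero_iff (ℓ : W →ₗ[ℝ] ℝ) {u v : W}
    (huv : LinearIndependent ℝ ![u, v]) :
    (∀ x ∈ projSeg u v, ℓ x.rep ≠ 0) ↔ 0 < ℓ u * ℓ v := by
  constructor
  · intro h
    have hu : ℓ u ≠ 0 := by
      have hu0 : (1 : ℝ) • u + (0 : ℝ) • v ≠ 0 := by simpa using huv.ne_zero 0
      simpa [apply_mk_rep_eq_zero_iff] using h _ ⟨1, 0, hu0, by simp, rfl⟩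
    by_contra! hle
    have hw : ℓ v • u + (-ℓ u) • v ≠ 0 := fun h0 ↦
      hu (neg_eq_zero.1 (LinearIndependent.pair_iff.1 huv _ _ h0).2)
    refine h _ ⟨_, _, hw, by nlinarith, rfl⟩ ((apply_mk_rep_eq_zero_iff ℓ hw).2 ?_)
    simp only [map_add, map_smul, smul_eq_mul]
    ring
  · rintro hpos _ ⟨a, b, hw, hab, rfl⟩ h0
    rw [apply_mk_rep_eq_zero_iff ℓ hw, map_add, map_smul, map_smul, smul_eq_mul,
      smul_eq_mul] at h0
    have hb : b * ℓ v = 0 := by nlinarith [sq_nonneg (b * ℓ v)]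
    have ha : a * ℓ u = 0 := by linarith
    apply hw
    simp [(mul_eq_zero.1 ha).resolve_right (left_ne_zero_of_mul hpos.ne'),
      (mul_eq_zero.1 hb).resolve_right (right_ne_zero_of_mul hpos.ne')]

theorem forall_mem_projSegN_apply_rep_ne_zero_iff (ℓ : W →ₗ[ℝ] ℝ) {u v : W}
    (huv : LinearIndependent ℝ ![u, v]) :
    (∀ x ∈ projSegN u v, ℓ x.rep ≠ 0) ↔ ℓ u * ℓ v < 0 := by
  rw [projSegN_eq_projSeg_neg, forall_mem_projSeg_apply_rep_ne_zero_iff ℓ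
    (LinearIndependent.pair_neg_right_iff.2 huv), map_neg, mul_neg, neg_pos]

end Segments

theorem xor_forall_pos_forall_neg {α : Type*} {s : Set α} (hs : s.Nonempty) {F : α → ℝ}
    (hF : ∀ p ∈ s, ∀ q ∈ s, 0 < F p * F q) : Xor (∀ x ∈ s, 0 < F x) (∀ x ∈ s, F x < 0) := by
  obtain ⟨x₀, hx₀⟩ := hs
  rcases (left_ne_zero_of_mul (hF x₀ hx₀ x₀ hx₀).ne').lt_or_gt with hneg | hpos
  · exact .inr ⟨fun x hx ↦ neg_of_mul_pos_right (hF x₀ hx₀ x hx) hneg.le,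
      fun h ↦ (h x₀ hx₀).not_gt hneg⟩
  · exact .inl ⟨fun x hx ↦ pos_of_mul_pos_right (hF x₀ hx₀ x hx) hpos.le,
      fun h ↦ (h x₀ hx₀).not_gt hpos⟩

section Convexity

variable {W : Type*} [AddCommGroup W] [Module ℝ W] {S : Set (ℙ ℝ W)}

theorem IsProjConvex.apply_mul_apply_pos (hS : IsProjConvex S) {φ g : W →ₗ[ℝ] ℝ}
    (hφ : ∀ x ∈ S, φ x.rep ≠ 0) (hg : ∀ x ∈ S, g x.rep ≠ 0) {p q : ℙ ℝ W} (hp : p ∈ S)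
    (hq : q ∈ S) : 0 < φ p.rep * g p.rep * (φ q.rep * g q.rep) := by
  rcases eq_or_ne p q with rfl | hpq
  · exact mul_self_pos.2 (mul_ne_zero (hφ p hp) (hg p hp))
  have huv := linearIndependent_pair_iff_ne.2 hpq
  rw [show φ p.rep * g p.rep * (φ q.rep * g q.rep)
    = φ p.rep * φ q.rep * (g p.rep * g q.rep) by ring]
  rcases hS p hp q hq hpq with ⟨hseg, -⟩ | ⟨hseg, -⟩
  · have sign (ℓ : W →ₗ[ℝ] ℝ) (hℓ : ∀ x ∈ S, ℓ x.rep ≠ 0) : 0 < ℓ p.rep * ℓ q.rep :=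
      (forall_mem_projSeg_apply_rep_ne_zero_iff ℓ huv).1 fun x hx ↦ hℓ x (hseg hx)
    exact mul_pos (sign φ hφ) (sign g hg)
  · have sign (ℓ : W →ₗ[ℝ] ℝ) (hℓ : ∀ x ∈ S, ℓ x.rep ≠ 0) : ℓ p.rep * ℓ q.rep < 0 :=
      (forall_mem_projSegN_apply_rep_ne_zero_iff ℓ huv).1 fun x hx ↦ hℓ x (hseg hx)
    exact mul_pos_of_neg_of_neg (sign φ hφ) (sign g hg)

theorem mk_mem_phiMap_iff {φ : Module.Dual ℝ W} (hφ : φ ≠ 0) :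
    mk ℝ φ hφ ∈ PhiMap S ↔ ∀ x ∈ S, φ x.rep ≠ 0 :=
  forall₂_congr fun x _ ↦ (apply_mk_rep_eq_zero_iff (Module.Dual.eval ℝ W x.rep) hφ).not

theorem projSeg_subset_phiMap_iff {φ g : Module.Dual ℝ W}
    (hφg : LinearIndependent ℝ ![φ, g]) :
    projSeg φ g ⊆ PhiMap S ↔ ∀ x ∈ S, 0 < φ x.rep * g x.rep := by
  refine ⟨fun h x hx ↦ ?_, fun h ψ hψ x hx ↦ ?_⟩
  · exact (forall_mem_projSeg_apply_rep_ne_zero_iff (Module.Dual.eval ℝ W x.rep) hφg).1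
      fun ψ hψ ↦ h hψ x hx
  · exact (forall_mem_projSeg_apply_rep_ne_zero_iff (Module.Dual.eval ℝ W x.rep) hφg).2
      (h x hx) ψ hψ

theorem projSegN_subset_phiMap_iff {φ g : Module.Dual ℝ W}
    (hφg : LinearIndependent ℝ ![φ, g]) :
    projSegN φ g ⊆ PhiMap S ↔ ∀ x ∈ S, φ x.rep * g x.rep < 0 := by
  rw [projSegN_eq_projSeg_neg, projSeg_subset_phiMap_iff
    (LinearIndependent.pair_neg_right_iff.2 hφg)]
  simp

theorem IsProjConvex.phiMap (hS : IsProjConvex S) (hne : S.Nonempty) :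
    IsProjConvex (PhiMap S) := by
  intro ψ hψ χ hχ hψχ
  have hψχ' := linearIndependent_pair_iff_ne.2 hψχ
  rw [projSeg_subset_phiMap_iff hψχ', projSegN_subset_phiMap_iff hψχ']
  exact xor_forall_pos_forall_neg hne fun p hp q hq ↦ hS.apply_mul_apply_pos hψ hχ hp hq

end Convexity

section Topology

open Filter Topology

variable {V : Type*} [NormedAddCommGroup V] [NormedSpace ℝ V] [FiniteDimensional ℝ V]

theorem isQuotientMap_mk' (W : Type*) [NormedAddCommGroup W] [NormedSpace ℝ W] :
    IsQuotientMap (mk' ℝ : {w : W // w ≠ 0} → ℙ ℝ W) :=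
  isQuotientMap_quotient_mk'

theorem continuous_dual_apply : Continuous fun p : Module.Dual ℝ V × V ↦ p.1 p.2 := by
  have : Continuous (LinearMap.toContinuousLinearMap : Module.Dual ℝ V ≃ₗ[ℝ] (V →L[ℝ] ℝ)) :=
    LinearMap.continuous_of_finiteDimensional _
  exact isBoundedBilinearMap_apply.continuous.comp (this.prodMap continuous_id)

theorem isOpen_setOf_forall_mem_apply_ne_zero {K : Set V} (hK : IsCompact K) :
    IsOpen {φ : Module.Dual ℝ V | ∀ v ∈ K, φ v ≠ 0} :=
  isOpen_iff_eventually.2 fun _ hφ₀ ↦ hK.eventually_forall_of_forall_eventually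
    fun v hv ↦ continuous_dual_apply.continuousAt.eventually_ne (hφ₀ v hv)

theorem isOpen_setOf_forall_mem_apply_rep_ne_zero {S : Set (ℙ ℝ V)} (hS : IsClosed S) :
    IsOpen {φ : Module.Dual ℝ V | ∀ x ∈ S, φ x.rep ≠ 0} := by
  let σ : Metric.sphere (0 : V) 1 → ℙ ℝ V := fun v ↦ mk ℝ v (ne_zero_of_mem_unit_sphere v)
  have hσ : Continuous σ := continuous_quotient_mk'.comp <|
    continuous_subtype_val.subtype_mk _
  have hK : IsCompact (Subtype.val '' (σ ⁻¹' S)) :=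
    ((hS.preimage hσ).isCompact).image continuous_subtype_val
  convert isOpen_setOf_forall_mem_apply_ne_zero hK using 3 with φ
  refine ⟨fun h _ ⟨v, hv, hvv⟩ ↦ hvv ▸ ?_, fun h x hx ↦ ?_⟩
  · simpa [σ, apply_mk_rep_eq_zero_iff] using h _ hv
  · have hv : ‖x.rep‖⁻¹ • x.rep ∈ Metric.sphere (0 : V) 1 := by
      simp [norm_smul, x.rep_nonzero]
    have hσv : σ ⟨_, hv⟩ = x :=
      ((mk_eq_mk_iff' ℝ _ _ _ x.rep_nonzero).2 ⟨_, rfl⟩).trans x.mk_rep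
    simpa [x.rep_nonzero] using h _ ⟨⟨_, hv⟩, by rwa [Set.mem_preimage, hσv], rfl⟩

theorem eventually_exists_apply_eq_zero {φ₀ : Module.Dual ℝ V} (hφ₀ : φ₀ ≠ 0) {v₀ : V}
    (hv₀ : φ₀ v₀ = 0) {U : Set V} (hU : U ∈ 𝓝 v₀) : ∀ᶠ φ in 𝓝 φ₀, ∃ v ∈ U, φ v = 0 := by
  obtain ⟨w, hw⟩ : ∃ w, φ₀ w ≠ 0 := by simpa [DFunLike.ne_iff] using hφ₀
  have eval_continuous (v : V) : Continuous fun φ : Module.Dual ℝ V ↦ φ v :=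
    LinearMap.continuous_of_finiteDimensional (Module.Dual.eval ℝ V v)
  -- project `v₀` onto `ker φ` along `w`
  let F : Module.Dual ℝ V → V := fun φ ↦ v₀ - (φ v₀ / φ w) • w
  have hF : ContinuousAt F φ₀ := continuousAt_const.sub
    (((eval_continuous v₀).continuousAt.div (eval_continuous w).continuousAt hw).smul
      continuousAt_const)
  have hFU : ∀ᶠ φ in 𝓝 φ₀, F φ ∈ U := hF (by simpa [F, hv₀] using hU)
  filter_upwards [hFU, (eval_continuous w).continuousAt.eventually_ne hw] with φ hφU hφw
  refine ⟨F φ, hφU, ?_⟩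
  simp only [F, map_sub, map_smul, smul_eq_mul]
  field_simp
  ring

theorem isClosed_phiMap {S : Set (ℙ ℝ V)} (hS : IsOpen S) : IsClosed (PhiMap S) := by
  rw [← isOpen_compl_iff, ← (isQuotientMap_mk' _).isOpen_preimage, isOpen_iff_eventually]
  intro φ₀ hφ₀
  simp only [Set.mem_preimage, Set.mem_compl_iff, mk'_eq_mk, mk_mem_phiMap_iff, not_forall,
    not_not] at hφ₀ ⊢
  obtain ⟨x, hx, hφ₀x⟩ := hφ₀
  have hU : IsOpen (Subtype.val '' (mk' ℝ ⁻¹' S)) :=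
    isOpen_ne.isOpenMap_subtype_val _ (hS.preimage (isQuotientMap_mk' V).continuous)
  have hxU : x.rep ∈ Subtype.val '' (mk' ℝ ⁻¹' S) :=
    ⟨⟨x.rep, x.rep_nonzero⟩, by simpa [mk'_eq_mk] using hx, rfl⟩
  filter_upwards [continuous_subtype_val.continuousAt.eventually
    (eventually_exists_apply_eq_zero φ₀.2 hφ₀x (hU.mem_nhds hxU))]
  rintro φ ⟨_, ⟨v, hv, rfl⟩, hφv⟩
  exact ⟨_, hv, (apply_mk_rep_eq_zero_iff φ.1 v.2).2 hφv⟩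

theorem isOpen_phiMap {S : Set (ℙ ℝ V)} (hS : IsClosed S) : IsOpen (PhiMap S) := by
  rw [← (isQuotientMap_mk' _).isOpen_preimage]
  convert (isOpen_setOf_forall_mem_apply_rep_ne_zero hS).preimage continuous_subtype_val
    using 1
  ext φ
  exact mk_mem_phiMap_iff φ.2

end Topology

/-- For a nonempty subset `S` of a real projective space: if `S` is projective convex then so is
`Φ(S)`; if moreover `S` is open then `Φ(S)` is closed, and if `S` is closed then `Φ(S)` is
open. -/
theorem phiMap_convex_open_closed
    {V : Type*} [NormedAddCommGroup V] [NormedSpace ℝ V] [FiniteDimensional ℝ V]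
    (S : Set (ℙ ℝ V)) (hne : S.Nonempty) :
    (IsProjConvex S → IsProjConvex (PhiMap S)) ∧
    (IsOpen S → IsProjConvex S → IsClosed (PhiMap S) ∧ IsProjConvex (PhiMap S)) ∧
    (IsClosed S → IsProjConvex S → IsOpen (PhiMap S) ∧ IsProjConvex (PhiMap S)) :=
  ⟨fun hS ↦ hS.phiMap hne,
    fun hSo hS ↦ ⟨isClosed_phiMap hSo, hS.phiMap hne⟩,
    fun hSc hS ↦ ⟨isOpen_phiMap hSc, hS.phiMap hne⟩⟩
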